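/- arXiv:1211.1449 — 2 statements merged into one kernel-verified Lean document; each statement's English description precedes it below -/
import Mathlib

section
/- Let Q be a symmetric positive semidefinite real n×n matrix, let A be a real n×n matrix, b₀, q ∈ ℝⁿ, c ∈ ℝ. Then for every x ∈ ℝⁿ, inf over w ∈ ℝⁿ of (Ax+b₀+w)ᵀQ(Ax+b₀+w) + 2qᵀ(Ax+b₀+w) + c + ‖w‖² equals xᵀP_a x + 2P_bᵀx + P_c, where P_a = AᵀQ(I+Q)⁻¹A, P_b = Aᵀ(Q(I+Q)⁻¹b₀ + (I+Q)⁻¹q), and P_c = b₀ᵀQ(I+Q)⁻¹b₀ + 2qᵀ(I+Q)⁻¹b₀ + c − qᵀ(I+Q)⁻¹q. Moreover P_a is symmetric positive semidefinite. -/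
/-!
Writing `z = Ax + b₀`, the objective is the quadratic
`wᵀ(I + Q)w + 2(Qz + q)ᵀw + zᵀQz + 2qᵀz + c` in `w`. Since `I + Q` is positive definite,
completing the square shows that its infimum is attained at `w = -(I + Q)⁻¹(Qz + q)`, with value
`zᵀQz + 2qᵀz + c - (Qz + q)ᵀ(I + Q)⁻¹(Qz + q)`. The identities
`Q(I + Q)⁻¹ = (I + Q)⁻¹Q = I - (I + Q)⁻¹` reduce this to `zᵀQ(I + Q)⁻¹z + 2zᵀ(I + Q)⁻¹q + c -
qᵀ(I + Q)⁻¹q`, and expanding `z = Ax + b₀` gives the coefficients. Finally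
`Q(I + Q)⁻¹ = (I + Q)⁻¹(Q + Q²)(I + Q)⁻¹` is congruent to a positive semidefinite matrix, hence so
is `Aᵀ Q(I + Q)⁻¹ A`.
-/

open Matrix
open scoped ComplexOrder

namespace Matrix

variable {ι α : Type*} [Fintype ι]

theorem mulVec_dotProduct [CommSemiring α] (A : Matrix ι ι α) (a b : ι → α) :
    A *ᵥ a ⬝ᵥ b = a ⬝ᵥ Aᵀ *ᵥ b := by
  rw [mulVec_transpose, dotProduct_comm, dotProduct_mulVec, dotProduct_comm]

theorem IsSymm.dotProduct_mulVec_comm [CommSemiring α] {S : Matrix ι ι α} (hS : S.IsSymm)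
    (a b : ι → α) : a ⬝ᵥ S *ᵥ b = b ⬝ᵥ S *ᵥ a := by
  rw [dotProduct_mulVec, ← mulVec_transpose, hS.eq, dotProduct_comm]

theorem IsSymm.dotProduct_mulVec_add_self [CommRing α] {S : Matrix ι ι α} (hS : S.IsSymm)
    (a b : ι → α) :
    (a + b) ⬝ᵥ S *ᵥ (a + b) = a ⬝ᵥ S *ᵥ a + 2 * (a ⬝ᵥ S *ᵥ b) + b ⬝ᵥ S *ᵥ b := by
  rw [mulVec_add, add_dotProduct, dotProduct_add, dotProduct_add, hS.dotProduct_mulVec_comm b a]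
  ring

theorem IsSymm.dotProduct_mulVec_mulVec_add [CommRing α] {S : Matrix ι ι α} (hS : S.IsSymm)
    (A : Matrix ι ι α) (x b : ι → α) :
    (A *ᵥ x + b) ⬝ᵥ S *ᵥ (A *ᵥ x + b)
      = x ⬝ᵥ (Aᵀ * S * A) *ᵥ x + 2 * ((Aᵀ *ᵥ S *ᵥ b) ⬝ᵥ x) + b ⬝ᵥ S *ᵥ b := by
  rw [hS.dotProduct_mulVec_add_self, mulVec_dotProduct A x (S *ᵥ A *ᵥ x),
    mulVec_dotProduct A x (S *ᵥ b), dotProduct_comm x (Aᵀ *ᵥ S *ᵥ b), mulVec_mulVec,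
    mulVec_mulVec]

variable [DecidableEq ι]

theorem IsSymm.dotProduct_mulVec_add_add_dotProduct_self [CommRing α] {Q : Matrix ι ι α}
    (hQ : Q.IsSymm) (z w q : ι → α) (c : α) :
    (z + w) ⬝ᵥ Q *ᵥ (z + w) + 2 * (q ⬝ᵥ (z + w)) + c + w ⬝ᵥ w
      = w ⬝ᵥ (1 + Q) *ᵥ w + 2 * ((Q *ᵥ z + q) ⬝ᵥ w) + (z ⬝ᵥ Q *ᵥ z + 2 * (q ⬝ᵥ z) + c) := by
  rw [hQ.dotProduct_mulVec_add_self, add_mulVec, one_mulVec, add_dotProduct,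
    mulVec_dotProduct Q z w, hQ.eq, dotProduct_add, dotProduct_add, dotProduct_comm q w]
  ring

theorem mul_inv_one_add [CommRing α] {Q : Matrix ι ι α} (h : IsUnit (1 + Q).det) :
    Q * (1 + Q)⁻¹ = 1 - (1 + Q)⁻¹ := by
  rw [eq_sub_iff_add_eq, add_comm, ← one_add_mul, mul_nonsing_inv _ h]

theorem inv_one_add_mul [CommRing α] {Q : Matrix ι ι α} (h : IsUnit (1 + Q).det) :
    (1 + Q)⁻¹ * Q = 1 - (1 + Q)⁻¹ := by
  rw [eq_sub_iff_add_eq, add_comm, ← mul_one_add, nonsing_inv_mul _ h]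

theorem IsSymm.dotProduct_mulVec_sub_inv_one_add [CommRing α] {Q : Matrix ι ι α}
    (hQ : Q.IsSymm) (h : IsUnit (1 + Q).det) (z q : ι → α) (c : α) :
    z ⬝ᵥ Q *ᵥ z + 2 * (q ⬝ᵥ z) + c - (Q *ᵥ z + q) ⬝ᵥ (1 + Q)⁻¹ *ᵥ (Q *ᵥ z + q)
      = z ⬝ᵥ (Q * (1 + Q)⁻¹) *ᵥ z + 2 * (z ⬝ᵥ (1 + Q)⁻¹ *ᵥ q) + c
        - q ⬝ᵥ (1 + Q)⁻¹ *ᵥ q := by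
  have hQQ : Q *ᵥ z ⬝ᵥ (1 + Q)⁻¹ *ᵥ Q *ᵥ z = z ⬝ᵥ Q *ᵥ z - z ⬝ᵥ (Q * (1 + Q)⁻¹) *ᵥ z := by
    rw [mulVec_dotProduct, hQ.eq, mulVec_mulVec, mulVec_mulVec, mul_assoc, inv_one_add_mul h,
      mul_sub, mul_one, sub_mulVec, dotProduct_sub]
  have hQq : Q *ᵥ z ⬝ᵥ (1 + Q)⁻¹ *ᵥ q = z ⬝ᵥ q - z ⬝ᵥ (1 + Q)⁻¹ *ᵥ q := by
    rw [mulVec_dotProduct, hQ.eq, mulVec_mulVec, mul_inv_one_add h, sub_mulVec, one_mulVec,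
      dotProduct_sub]
  rw [(isSymm_one.add hQ).inv.dotProduct_mulVec_add_self, hQQ, hQq, dotProduct_comm q z]
  ring

theorem PosSemidef.mul_inv_one_add {𝕜 : Type*} [RCLike 𝕜] {Q : Matrix ι ι 𝕜}
    (hQ : Q.PosSemidef) : (Q * (1 + Q)⁻¹).PosSemidef := by
  have hdet : IsUnit (1 + Q).det :=
    (isUnit_iff_isUnit_det _).mp (PosDef.one.add_posSemidef hQ).isUnit
  have hW : (1 + Q)⁻¹ᴴ = (1 + Q)⁻¹ := by
    rw [conjTranspose_nonsing_inv, conjTranspose_add, conjTranspose_one, hQ.isHermitian.eq]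
  have hcongr : Q * (1 + Q)⁻¹ = (1 + Q)⁻¹ᴴ * (Q + Qᴴ * Q) * (1 + Q)⁻¹ := by
    rw [hW, hQ.isHermitian.eq, ← one_add_mul, ← mul_assoc, nonsing_inv_mul _ hdet, one_mul]
  rw [hcongr]
  exact (hQ.add (posSemidef_conjTranspose_mul_self Q)).conjTranspose_mul_mul_same _

theorem IsSymm.dotProduct_mulVec_add_eq_sub [Field α] {M : Matrix ι ι α} (hM : M.IsSymm)
    (h : IsUnit M.det) (w b : ι → α) :
    w ⬝ᵥ M *ᵥ w + 2 * (b ⬝ᵥ w)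
      = (w + M⁻¹ *ᵥ b) ⬝ᵥ M *ᵥ (w + M⁻¹ *ᵥ b) - b ⬝ᵥ M⁻¹ *ᵥ b := by
  have hMb : M *ᵥ M⁻¹ *ᵥ b = b := by rw [mulVec_mulVec, mul_nonsing_inv _ h, one_mulVec]
  rw [hM.dotProduct_mulVec_add_self, hMb, dotProduct_comm w b, dotProduct_comm (M⁻¹ *ᵥ b)]
  ring

theorem PosDef.iInf_dotProduct_mulVec_add {M : Matrix ι ι ℝ} (hM : M.PosDef) (b : ι → ℝ)
    (k : ℝ) : ⨅ w : ι → ℝ, (w ⬝ᵥ M *ᵥ w + 2 * (b ⬝ᵥ w) + k) = k - b ⬝ᵥ M⁻¹ *ᵥ b := by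
  have hdet : IsUnit M.det := (isUnit_iff_isUnit_det _).mp hM.isUnit
  simp_rw [(isHermitian_iff_isSymm.mp hM.isHermitian).dotProduct_mulVec_add_eq_sub hdet]
  have hnonneg (w : ι → ℝ) : 0 ≤ (w + M⁻¹ *ᵥ b) ⬝ᵥ M *ᵥ (w + M⁻¹ *ᵥ b) := by
    simpa using hM.posSemidef.dotProduct_mulVec_nonneg (w + M⁻¹ *ᵥ b)
  refine le_antisymm ?_ (le_ciInf fun w => by linarith [hnonneg w])
  refine (ciInf_le ⟨k - b ⬝ᵥ M⁻¹ *ᵥ b, ?_⟩ (-(M⁻¹ *ᵥ b))).trans_eq ?_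
  · rintro _ ⟨w, rfl⟩
    linarith [hnonneg w]
  · rw [neg_add_cancel, mulVec_zero, dotProduct_zero]
    ring

end Matrix

/-- Explicit spatially invariant coefficient update for one quadratic term under
disturbance minimization: for every `x`,
`inf_w (Ax+b₀+w)ᵀQ(Ax+b₀+w) + 2qᵀ(Ax+b₀+w) + c + ‖w‖² = xᵀP_a x + 2P_bᵀx + P_c`,
with `P_a = AᵀQ(I+Q)⁻¹A`, `P_b = Aᵀ(Q(I+Q)⁻¹b₀ + (I+Q)⁻¹q)`,
`P_c = b₀ᵀQ(I+Q)⁻¹b₀ + 2qᵀ(I+Q)⁻¹b₀ + c − qᵀ(I+Q)⁻¹q`; and `P_a` is symmetric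
positive semidefinite. -/
theorem quadratic_coefficient_update
    {n : ℕ} (Q A : Matrix (Fin n) (Fin n) ℝ) (hQ : Q.PosSemidef)
    (b₀ q : Fin n → ℝ) (c : ℝ)
    (Pa : Matrix (Fin n) (Fin n) ℝ) (Pb : Fin n → ℝ) (Pc : ℝ)
    (hPa : Pa = Aᵀ * (Q * (1 + Q)⁻¹) * A)
    (hPb : Pb = Aᵀ *ᵥ ((Q * (1 + Q)⁻¹) *ᵥ b₀ + (1 + Q)⁻¹ *ᵥ q))
    (hPc : Pc = b₀ ⬝ᵥ (Q * (1 + Q)⁻¹) *ᵥ b₀ + 2 * (q ⬝ᵥ (1 + Q)⁻¹ *ᵥ b₀) + c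
        - q ⬝ᵥ (1 + Q)⁻¹ *ᵥ q) :
    Pa.PosSemidef ∧
    ∀ x : Fin n → ℝ,
      (⨅ w : Fin n → ℝ,
          (A *ᵥ x + b₀ + w) ⬝ᵥ Q *ᵥ (A *ᵥ x + b₀ + w)
            + 2 * (q ⬝ᵥ (A *ᵥ x + b₀ + w)) + c + w ⬝ᵥ w)
        = x ⬝ᵥ Pa *ᵥ x + 2 * (Pb ⬝ᵥ x) + Pc := by
  have hM : (1 + Q).PosDef := PosDef.one.add_posSemidef hQ
  have hQs : Q.IsSymm := isHermitian_iff_isSymm.mp hQ.isHermitian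
  have hQW : (Q * (1 + Q)⁻¹).PosSemidef := hQ.mul_inv_one_add
  refine ⟨hPa ▸ by simpa using hQW.conjTranspose_mul_mul_same A, fun x => ?_⟩
  set z := A *ᵥ x + b₀
  calc _ = ⨅ w : Fin n → ℝ, (w ⬝ᵥ (1 + Q) *ᵥ w + 2 * ((Q *ᵥ z + q) ⬝ᵥ w)
          + (z ⬝ᵥ Q *ᵥ z + 2 * (q ⬝ᵥ z) + c)) :=
        iInf_congr fun w => hQs.dotProduct_mulVec_add_add_dotProduct_self z w q c
    _ = z ⬝ᵥ Q *ᵥ z + 2 * (q ⬝ᵥ z) + c - (Q *ᵥ z + q) ⬝ᵥ (1 + Q)⁻¹ *ᵥ (Q *ᵥ z + q) :=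
        hM.iInf_dotProduct_mulVec_add _ _
    _ = z ⬝ᵥ (Q * (1 + Q)⁻¹) *ᵥ z + 2 * (z ⬝ᵥ (1 + Q)⁻¹ *ᵥ q) + c
          - q ⬝ᵥ (1 + Q)⁻¹ *ᵥ q :=
        hQs.dotProduct_mulVec_sub_inv_one_add ((isUnit_iff_isUnit_det _).mp hM.isUnit) _ _ _
    _ = x ⬝ᵥ Pa *ᵥ x + 2 * (Pb ⬝ᵥ x) + Pc := by
        rw [hPa, hPb, hPc, (isHermitian_iff_isSymm.mp hQW.isHermitian).dotProduct_mulVec_mulVec_add,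
          add_dotProduct (A *ᵥ x), mulVec_dotProduct A x, dotProduct_comm x (Aᵀ *ᵥ _),
          (isSymm_one.add hQs).inv.dotProduct_mulVec_comm b₀ q, mulVec_add, add_dotProduct]
        ring
end

section
/- Let V₁, V₂ : ℝⁿ → ℝ be bounded below, and define for a function V the operator S[V](x) = inf over w ∈ ℝⁿ and λ in the standard simplex of ℝ^M of [ V(Ax + b₀ + w) + ‖w‖² + Σ_j λ_j (y_j − C_j x)ᵀH(y_j − C_j x) ], where A is a real n×n matrix, b₀ ∈ ℝⁿ, H is a symmetric positive semidefinite p×p matrix, C_j are p×n matrices and y_j ∈ ℝᵖ for j ∈ Fin M. Then for all x ∈ ℝⁿ, S[min(V₁, V₂)](x) = min( S[V₁](x), S[V₂](x) ), where min(V₁,V₂) denotes the pointwise minimum. -/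
/-!
Adding the cost `‖w‖² + Σ_j λ_j (y_j - C_j x)ᵀ H (y_j - C_j x)` commutes with `min`, and
an infimum of pointwise minima is the minimum of the infima as soon as both families are
bounded below. They are: `V₁, V₂` are bounded below and the cost is nonnegative because
`H` is positive semidefinite and `λ ≥ 0`.
-/

open Matrix

/-- In `ℝ` an empty infimum is `0`, hence the `min … 0`. -/
lemma Real.min_zero_le_iInf {ι : Sort*} {f : ι → ℝ} {m : ℝ} (h : ∀ i, m ≤ f i) :
    min m 0 ≤ ⨅ i, f i := by
  rcases isEmpty_or_nonempty ι with hι | hι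
  · simp [Real.iInf_of_isEmpty]
  · exact le_ciInf fun i => (min_le_left _ _).trans (h i)

lemma Real.min_zero_le_biInf {β : Type*} {s : Set β} {f : β → ℝ} {m : ℝ}
    (h : ∀ b ∈ s, m ≤ f b) : min m 0 ≤ ⨅ b ∈ s, f b := by
  simpa using Real.min_zero_le_iInf fun b => Real.min_zero_le_iInf (h b)

lemma Real.biInf_min_eq {β : Type*} {s : Set β} {f g : β → ℝ} {mf mg : ℝ}
    (hf : ∀ b ∈ s, mf ≤ f b) (hg : ∀ b ∈ s, mg ≤ g b) :
    ⨅ b ∈ s, min (f b) (g b) = min (⨅ b ∈ s, f b) (⨅ b ∈ s, g b) := by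
  have hbdd {h : β → ℝ} {m : ℝ} (hm : ∀ b ∈ s, m ≤ h b) :
      BddBelow (Set.range fun b => ⨅ _ : b ∈ s, h b) :=
    ⟨min m 0, by rintro _ ⟨b, rfl⟩; exact Real.min_zero_le_iInf (hm b)⟩
  rw [← ciInf_inf_eq (hbdd hf) (hbdd hg)]
  exact iInf_congr fun b =>
    ciInf_inf_eq (Set.finite_range _).bddBelow (Set.finite_range _).bddBelow

lemma Real.iInf_biInf_min_eq {α β : Type*} {s : Set β} {f g : α → β → ℝ} {mf mg : ℝ}
    (hf : ∀ a, ∀ b ∈ s, mf ≤ f a b) (hg : ∀ a, ∀ b ∈ s, mg ≤ g a b) :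
    ⨅ a, ⨅ b ∈ s, min (f a b) (g a b) =
      min (⨅ a, ⨅ b ∈ s, f a b) (⨅ a, ⨅ b ∈ s, g a b) := by
  have hbdd {h : α → β → ℝ} {m : ℝ} (hm : ∀ a, ∀ b ∈ s, m ≤ h a b) :
      BddBelow (Set.range fun a => ⨅ b ∈ s, h a b) :=
    ⟨min m 0, by rintro _ ⟨a, rfl⟩; exact Real.min_zero_le_biInf (hm a)⟩
  rw [← ciInf_inf_eq (hbdd hf) (hbdd hg)]
  exact iInf_congr fun a => Real.biInf_min_eq (hf a) (hg a)

lemma stdSimplex_weighted_quadratic_nonneg {ι κ : Type*} [Fintype ι] [Fintype κ]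
    {H : Matrix κ κ ℝ} (hH : H.PosSemidef) (r : ι → κ → ℝ) {l : ι → ℝ}
    (hl : l ∈ stdSimplex ℝ ι) : 0 ≤ ∑ j, l j * (r j ⬝ᵥ H *ᵥ r j) :=
  Finset.sum_nonneg fun j _ =>
    mul_nonneg (hl.1 j) (by simpa using hH.dotProduct_mulVec_nonneg (r j))

/-- Min-plus linearity of the dynamic programming operator: for `V₁, V₂` bounded
below, `S[min(V₁,V₂)](x) = min(S[V₁](x), S[V₂](x))` for all `x`. -/
theorem dp_operator_minplus_linear
    {n p M : ℕ}
    (A : Matrix (Fin n) (Fin n) ℝ) (b₀ : Fin n → ℝ)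
    (H : Matrix (Fin p) (Fin p) ℝ) (hH : H.PosSemidef)
    (C : Fin M → Matrix (Fin p) (Fin n) ℝ) (y : Fin M → Fin p → ℝ)
    (S : ((Fin n → ℝ) → ℝ) → (Fin n → ℝ) → ℝ)
    (hS : ∀ (V : (Fin n → ℝ) → ℝ) (x : Fin n → ℝ), S V x =
      ⨅ w : Fin n → ℝ, ⨅ l ∈ stdSimplex ℝ (Fin M),
        V (A *ᵥ x + b₀ + w) + w ⬝ᵥ w
          + ∑ j, l j * ((y j - C j *ᵥ x) ⬝ᵥ H *ᵥ (y j - C j *ᵥ x)))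
    (V₁ V₂ : (Fin n → ℝ) → ℝ)
    (m₁ m₂ : ℝ) (hV₁ : ∀ x, m₁ ≤ V₁ x) (hV₂ : ∀ x, m₂ ≤ V₂ x) :
    ∀ x : Fin n → ℝ,
      S (fun z => min (V₁ z) (V₂ z)) x = min (S V₁ x) (S V₂ x) := by
  intro x
  have hcost : ∀ w : Fin n → ℝ, ∀ l ∈ stdSimplex ℝ (Fin M),
      0 ≤ w ⬝ᵥ w + ∑ j, l j * ((y j - C j *ᵥ x) ⬝ᵥ H *ᵥ (y j - C j *ᵥ x)) :=
    fun w l hl => add_nonneg (by simpa using dotProduct_star_self_nonneg w)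
      (stdSimplex_weighted_quadratic_nonneg hH _ hl)
  rw [hS, hS, hS]
  simp only [← min_add_add_right]
  exact Real.iInf_biInf_min_eq
    (fun w l hl => by linarith [hV₁ (A *ᵥ x + b₀ + w), hcost w l hl])
    (fun w l hl => by linarith [hV₂ (A *ᵥ x + b₀ + w), hcost w l hl])
end
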